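/- If there is an FO²(τ)-bisimulation S between structures 𝔄 and 𝔅 with (aᵢ, bᵢ) ∈ S for all components of tuples a, b (of length at most 2) such that a ↦ b is a partial τ-isomorphism, then (𝔄, a) and (𝔅, b) satisfy exactly the same two-variable first-order formulas over signature τ. -/

import Mathlib

/-- A relational signature: relation symbols with arities, no function or
constant symbols. -/
structure Sig : Type 1 where
  Rel : Type
  arity : Rel → ℕ

/-- A relational structure for a signature. -/
structure Str (σ : Sig) : Type 1 where
  dom : Type
  interp : (R : σ.Rel) → (Fin (σ.arity R) → dom) → Prop

/-- Update an assignment on all variables occurring in the list `ys`. -/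
def updOn {D : Type} (v : ℕ → D) (ys : List ℕ) (w : ℕ → D) : ℕ → D :=
  fun n => if n ∈ ys then w n else v n

/-- `a ↦ b` is a partial `τ`-isomorphism between the tuples `a` (in `A`) and
`b` (in `B`). -/
def PartialIso {σ : Sig} (τ : Set σ.Rel) (A B : Str σ) {n : ℕ}
    (a : Fin n → A.dom) (b : Fin n → B.dom) : Prop :=
  (∀ i j : Fin n, a i = a j ↔ b i = b j) ∧
  ∀ R ∈ τ, ∀ t : Fin (σ.arity R) → Fin n, A.interp R (a ∘ t) ↔ B.interp R (b ∘ t)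

/-- Syntax of first-order formulas over named variables (relational
signature). -/
inductive Fml (σ : Sig) : Type
  | eq : ℕ → ℕ → Fml σ
  | rel : (R : σ.Rel) → (Fin (σ.arity R) → ℕ) → Fml σ
  | not : Fml σ → Fml σ
  | and : Fml σ → Fml σ → Fml σ
  | or : Fml σ → Fml σ → Fml σ
  | ex : ℕ → Fml σ → Fml σ
  | all : ℕ → Fml σ → Fml σ

namespace Fml

def Sat {σ : Sig} (A : Str σ) : Fml σ → (ℕ → A.dom) → Prop
  | .eq i j, v => v i = v j
  | .rel R t, v => A.interp R (fun k => v (t k))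
  | .not φ, v => ¬ Sat A φ v
  | .and φ ψ, v => Sat A φ v ∧ Sat A ψ v
  | .or φ ψ, v => Sat A φ v ∨ Sat A ψ v
  | .ex x φ, v => ∃ d, Sat A φ (Function.update v x d)
  | .all x φ, v => ∀ d, Sat A φ (Function.update v x d)

/-- Free variables. -/
def fv {σ : Sig} : Fml σ → Finset ℕ
  | .eq i j => {i, j}
  | .rel _ t => Finset.image t Finset.univ
  | .not φ => fv φ
  | .and φ ψ => fv φ ∪ fv ψ
  | .or φ ψ => fv φ ∪ fv ψ
  | .ex x φ => (fv φ).erase x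
  | .all x φ => (fv φ).erase x

/-- All (free and bound) variables. -/
def allVars {σ : Sig} : Fml σ → Finset ℕ
  | .eq i j => {i, j}
  | .rel _ t => Finset.image t Finset.univ
  | .not φ => allVars φ
  | .and φ ψ => allVars φ ∪ allVars ψ
  | .or φ ψ => allVars φ ∪ allVars ψ
  | .ex x φ => insert x (allVars φ)
  | .all x φ => insert x (allVars φ)

/-- The signature of a formula. -/
def sig {σ : Sig} : Fml σ → Set σ.Rel
  | .eq _ _ => ∅
  | .rel R _ => {R}
  | .not φ => sig φ
  | .and φ ψ => sig φ ∪ sig ψ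
  | .or φ ψ => sig φ ∪ sig ψ
  | .ex _ φ => sig φ
  | .all _ φ => sig φ

/-- Size of a formula. -/
def size {σ : Sig} : Fml σ → ℕ
  | .eq _ _ => 1
  | .rel R _ => 1 + σ.arity R
  | .not φ => size φ + 1
  | .and φ ψ => size φ + size ψ + 1
  | .or φ ψ => size φ + size ψ + 1
  | .ex _ φ => size φ + 1
  | .all _ φ => size φ + 1

/-- Quantifier-free formulas. -/
def QFree {σ : Sig} : Fml σ → Prop
  | .eq _ _ => True
  | .rel _ _ => True
  | .not φ => QFree φ
  | .and φ ψ => QFree φ ∧ QFree ψ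
  | .or φ ψ => QFree φ ∧ QFree ψ
  | .ex _ _ => False
  | .all _ _ => False

end Fml

/-- A two-variable formula: it uses only the two variables `0` ("x") and
`1` ("y"). -/
def IsFO2 {σ : Sig} (φ : Fml σ) : Prop := φ.allVars ⊆ {0, 1}

/-- The pointed structure `(A, a)` satisfies `φ` (the tuple `a` is assigned to
the variables `0, …, n-1`). -/
def SatTupleF {σ : Sig} (A : Str σ) (φ : Fml σ) {n : ℕ} (a : Fin n → A.dom) : Prop :=
  ∀ v : ℕ → A.dom, (∀ i : Fin n, v i = a i) → φ.Sat A v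

/-- Semantic entailment. -/
def FOEnt {σ : Sig} (φ ψ : Fml σ) : Prop :=
  ∀ (A : Str σ) (v : ℕ → A.dom), φ.Sat A v → ψ.Sat A v

/-- `S` is an FO²(τ)-bisimulation between `A` and `B`. -/
def FO2Bisim {σ : Sig} (τ : Set σ.Rel) (A B : Str σ) (S : Set (A.dom × B.dom)) : Prop :=
  (∀ a : A.dom, ∃ b, (a, b) ∈ S) ∧ (∀ b : B.dom, ∃ a, (a, b) ∈ S) ∧
  ∀ p ∈ S,
    (∀ a' : A.dom, ∃ b' : B.dom,
      PartialIso τ A B ![p.1, a'] ![p.2, b'] ∧ (a', b') ∈ S) ∧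
    (∀ b' : B.dom, ∃ a' : A.dom,
      PartialIso τ A B ![p.1, a'] ![p.2, b'] ∧ (a', b') ∈ S)

/-- `(A, a) ∼_{FO²,τ} (B, b)` for tuples of equal length. -/
def FO2Bisimilar {σ : Sig} (τ : Set σ.Rel) (A B : Str σ) {n : ℕ}
    (a : Fin n → A.dom) (b : Fin n → B.dom) : Prop :=
  PartialIso τ A B a b ∧ ∃ S, FO2Bisim τ A B S ∧ ∀ i, (a i, b i) ∈ S

/-- `(A, a)` and `(B, b)` satisfy exactly the same FO²(τ)-formulas. -/
def FO2Equiv {σ : Sig} (τ : Set σ.Rel) (A B : Str σ) {n : ℕ}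
    (a : Fin n → A.dom) (b : Fin n → B.dom) : Prop :=
  ∀ φ : Fml σ, IsFO2 φ → φ.sig ⊆ τ → φ.fv ⊆ Finset.range n →
    (SatTupleF A φ a ↔ SatTupleF B φ b)

/-- Joint FO²(τ)-consistency of two formulas with free variables among
`0, …, n-1`. -/
def JointFO2Con {σ : Sig} (τ : Set σ.Rel) (n : ℕ) (φ ψ : Fml σ) : Prop :=
  ∃ (A B : Str σ) (a : Fin n → A.dom) (b : Fin n → B.dom),
    SatTupleF A φ a ∧ SatTupleF B ψ b ∧ FO2Bisimilar τ A B a b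

/-! An FO² formula only ever looks at the values of the variables `0` and `1`, so we follow a pair
of assignments whose values there are pairwise `S`-related and form a partial isomorphism. The
bisimulation's forth and back conditions, applied at the variable that is *not* being requantified,
preserve this invariant under every quantifier step, and at atomic formulas it is exactly what is
needed. Tuples of any length reduce to such a pair: longer ones by restriction, shorter ones by one
forth step. -/

namespace Fml

variable {σ : Sig} {A : Str σ}

theorem sat_congr (φ : Fml σ) {v v' : ℕ → A.dom} (h : ∀ x ∈ φ.fv, v x = v' x) :
    φ.Sat A v ↔ φ.Sat A v' := by
  induction φ generalizing v v' with
  | eq i j => simp only [Sat, h i (by simp [fv]), h j (by simp [fv])]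
  | rel R t => simp only [Sat, fun k => h (t k) (by simp [fv])]
  | not φ ih => exact not_congr (ih h)
  | and φ ψ ihφ ihψ =>
    exact and_congr (ihφ fun x hx => h x (by simp [fv, hx]))
      (ihψ fun x hx => h x (by simp [fv, hx]))
  | or φ ψ ihφ ihψ =>
    exact or_congr (ihφ fun x hx => h x (by simp [fv, hx]))
      (ihψ fun x hx => h x (by simp [fv, hx]))
  | ex x φ ih =>
    refine exists_congr fun d => ih fun y hy => ?_
    rcases eq_or_ne y x with rfl | hne
    · simp
    · simpa [Function.update_of_ne hne] using h y (by simp [fv, hne, hy])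
  | all x φ ih =>
    refine forall_congr' fun d => ih fun y hy => ?_
    rcases eq_or_ne y x with rfl | hne
    · simp
    · simpa [Function.update_of_ne hne] using h y (by simp [fv, hne, hy])

end Fml

theorem satTupleF_iff_sat {σ : Sig} {A : Str σ} {φ : Fml σ} {n : ℕ} {a : Fin n → A.dom}
    {v : ℕ → A.dom} (hv : ∀ i : Fin n, v i = a i) (hfv : φ.fv ⊆ Finset.range n) :
    SatTupleF A φ a ↔ φ.Sat A v := by
  refine ⟨fun h => h v hv, fun h v' hv' => (φ.sat_congr fun x hx => ?_).1 h⟩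
  have hxn : x < n := Finset.mem_range.1 (hfv hx)
  exact (hv ⟨x, hxn⟩).trans (hv' ⟨x, hxn⟩).symm

theorem IsFO2.lt_two {σ : Sig} {φ : Fml σ} (h : IsFO2 φ) {x : ℕ} (hx : x ∈ φ.allVars) :
    x < 2 := by
  have := h hx
  simp only [Finset.mem_insert, Finset.mem_singleton] at this
  omega

theorem PartialIso.comp {σ : Sig} {τ : Set σ.Rel} {A B : Str σ} {m n : ℕ}
    {a : Fin n → A.dom} {b : Fin n → B.dom} (h : PartialIso τ A B a b) (π : Fin m → Fin n) :
    PartialIso τ A B (a ∘ π) (b ∘ π) :=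
  ⟨fun i j => h.1 (π i) (π j), fun R hR t => h.2 R hR (π ∘ t)⟩

def PairLinked {σ : Sig} (τ : Set σ.Rel) {A B : Str σ} (S : Set (A.dom × B.dom))
    (v : ℕ → A.dom) (w : ℕ → B.dom) : Prop :=
  PartialIso τ A B (fun i : Fin 2 => v i) (fun i : Fin 2 => w i) ∧ ∀ i : Fin 2, (v i, w i) ∈ S

namespace PairLinked

variable {σ : Sig} {τ : Set σ.Rel} {A B : Str σ} {S : Set (A.dom × B.dom)}
  {v : ℕ → A.dom} {w : ℕ → B.dom} {x : ℕ}

theorem update (hvw : PairLinked τ S v w) (hx : x < 2) {d : A.dom} {e : B.dom}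
    (hiso : PartialIso τ A B ![v (1 - x), d] ![w (1 - x), e]) (hde : (d, e) ∈ S) :
    PairLinked τ S (Function.update v x d) (Function.update w x e) := by
  interval_cases x
  · refine ⟨?_, fun i => ?_⟩
    · convert hiso.comp ![1, 0] using 1 <;> funext i <;> fin_cases i <;> simp
    · have h₁ : (v 1, w 1) ∈ S := hvw.2 1
      fin_cases i <;> simp [h₁, hde]
  · refine ⟨?_, fun i => ?_⟩
    · convert hiso using 1 <;> funext i <;> fin_cases i <;> simp
    · have h₀ : (v 0, w 0) ∈ S := hvw.2 0
      fin_cases i <;> simp [h₀, hde]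

theorem forth (hS : FO2Bisim τ A B S) (hvw : PairLinked τ S v w) (hx : x < 2) (d : A.dom) :
    ∃ e, PairLinked τ S (Function.update v x d) (Function.update w x e) := by
  obtain ⟨e, hiso, hde⟩ := (hS.2.2 _ (hvw.2 ⟨1 - x, by omega⟩)).1 d
  exact ⟨e, hvw.update hx hiso hde⟩

theorem back (hS : FO2Bisim τ A B S) (hvw : PairLinked τ S v w) (hx : x < 2) (e : B.dom) :
    ∃ d, PairLinked τ S (Function.update v x d) (Function.update w x e) := by
  obtain ⟨d, hiso, hde⟩ := (hS.2.2 _ (hvw.2 ⟨1 - x, by omega⟩)).2 e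
  exact ⟨d, hvw.update hx hiso hde⟩

theorem sat_iff (hS : FO2Bisim τ A B S) {φ : Fml σ} (h2 : IsFO2 φ) (hτ : φ.sig ⊆ τ)
    (hvw : PairLinked τ S v w) : φ.Sat A v ↔ φ.Sat B w := by
  induction φ generalizing v w with
  | eq i j =>
    exact hvw.1.1 ⟨i, h2.lt_two (by simp [Fml.allVars])⟩ ⟨j, h2.lt_two (by simp [Fml.allVars])⟩
  | rel R t =>
    exact hvw.1.2 R (hτ rfl) fun k => ⟨t k, h2.lt_two (by simp [Fml.allVars])⟩
  | not φ ih => exact not_congr (ih h2 hτ hvw)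
  | and φ ψ ihφ ihψ =>
    exact and_congr (ihφ (Finset.union_subset_left h2) (Set.union_subset_iff.1 hτ).1 hvw)
      (ihψ (Finset.union_subset_right h2) (Set.union_subset_iff.1 hτ).2 hvw)
  | or φ ψ ihφ ihψ =>
    exact or_congr (ihφ (Finset.union_subset_left h2) (Set.union_subset_iff.1 hτ).1 hvw)
      (ihψ (Finset.union_subset_right h2) (Set.union_subset_iff.1 hτ).2 hvw)
  | ex x φ ih =>
    have hx := h2.lt_two (Finset.mem_insert_self x _)
    have h2' : IsFO2 φ := (Finset.subset_insert x _).trans h2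
    constructor
    · rintro ⟨d, hd⟩
      obtain ⟨e, he⟩ := hvw.forth hS hx d
      exact ⟨e, (ih h2' hτ he).1 hd⟩
    · rintro ⟨e, he⟩
      obtain ⟨d, hd⟩ := hvw.back hS hx e
      exact ⟨d, (ih h2' hτ hd).2 he⟩
  | all x φ ih =>
    have hx := h2.lt_two (Finset.mem_insert_self x _)
    have h2' : IsFO2 φ := (Finset.subset_insert x _).trans h2
    constructor
    · intro hd e
      obtain ⟨d, hde⟩ := hvw.back hS hx e
      exact (ih h2' hτ hde).1 (hd d)
    · intro he d
      obtain ⟨e, hde⟩ := hvw.forth hS hx d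
      exact (ih h2' hτ hde).2 (he e)

end PairLinked

theorem FO2Bisim.exists_pairLinked_const {σ : Sig} {τ : Set σ.Rel} {A B : Str σ}
    {S : Set (A.dom × B.dom)} (hS : FO2Bisim τ A B S) {a₀ : A.dom} {b₀ : B.dom}
    (hab : (a₀, b₀) ∈ S) : ∃ w : ℕ → B.dom, w 0 = b₀ ∧ PairLinked τ S (fun _ => a₀) w := by
  obtain ⟨e, hiso, hae⟩ := (hS.2.2 _ hab).1 a₀
  refine ⟨fun k => if k = 0 then b₀ else e, rfl, ?_, fun i => ?_⟩
  · convert hiso using 1 <;> funext i <;> fin_cases i <;> rfl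
  · fin_cases i <;> simp [hab, hae]

theorem FO2Bisim.exists_pairLinked {σ : Sig} {τ : Set σ.Rel} {A B : Str σ} {n : ℕ}
    [Nonempty A.dom] {S : Set (A.dom × B.dom)} (hS : FO2Bisim τ A B S)
    {a : Fin n → A.dom} {b : Fin n → B.dom} (hab : PartialIso τ A B a b)
    (hmem : ∀ i, (a i, b i) ∈ S) :
    ∃ v w, PairLinked τ S v w ∧ (∀ i : Fin n, v i = a i) ∧ ∀ i : Fin n, w i = b i := by
  rcases n with _ | _ | n
  · obtain ⟨a₀⟩ := ‹Nonempty A.dom›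
    obtain ⟨b₀, hb₀⟩ := hS.1 a₀
    obtain ⟨w, -, hw⟩ := hS.exists_pairLinked_const hb₀
    exact ⟨_, w, hw, fun i => i.elim0, fun i => i.elim0⟩
  · obtain ⟨w, hw₀, hw⟩ := hS.exists_pairLinked_const (hmem 0)
    exact ⟨_, w, hw, Fin.forall_fin_one.2 rfl, Fin.forall_fin_one.2 hw₀⟩
  · let v (k : ℕ) : A.dom := if hk : k < n + 2 then a ⟨k, hk⟩ else a 0
    let w (k : ℕ) : B.dom := if hk : k < n + 2 then b ⟨k, hk⟩ else b 0
    have hv (i : Fin (n + 2)) : v i = a i := dif_pos i.2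
    have hw (i : Fin (n + 2)) : w i = b i := dif_pos i.2
    refine ⟨v, w, ⟨?_, fun i => ?_⟩, hv, hw⟩
    · convert hab.comp (Fin.castLE (by omega : 2 ≤ n + 2)) using 1 <;> funext i
      exacts [hv (Fin.castLE _ i), hw (Fin.castLE _ i)]
    · have hi := hmem (Fin.castLE (by omega) i)
      rw [← hv, ← hw] at hi
      exact hi

theorem fo2_bisimilar_implies_fo2_equivalent_general {σ : Sig} (τ : Set σ.Rel)
    (A B : Str σ) {n : ℕ} (a : Fin n → A.dom) (b : Fin n → B.dom)
    (h : FO2Bisimilar τ A B a b) : FO2Equiv τ A B a b := by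
  obtain ⟨hab, S, hS, hmem⟩ := h
  intro φ h2 hτ hfv
  rcases isEmpty_or_nonempty A.dom with hA | hA
  · have : IsEmpty B.dom := ⟨fun b₀ => (hS.2.1 b₀).elim fun a₀ _ => isEmptyElim a₀⟩
    exact iff_of_true (fun v _ => isEmptyElim (v 0)) (fun w _ => isEmptyElim (w 0))
  · obtain ⟨v, w, hvw, hv, hw⟩ := hS.exists_pairLinked hab hmem
    rw [satTupleF_iff_sat hv hfv, satTupleF_iff_sat hw hfv]
    exact hvw.sat_iff hS h2 hτ

/-- If there is an FO²(τ)-bisimulation `S` between `A` and `B`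
relating all components of the tuples `a`, `b` (of length at most 2) such that
`a ↦ b` is a partial τ-isomorphism, then `(A, a)` and `(B, b)` satisfy exactly
the same two-variable first-order formulas over `τ`. -/
theorem fo2_bisimilar_implies_fo2_equivalent {σ : Sig} (τ : Set σ.Rel)
    (A B : Str σ) {n : ℕ} (hn : n ≤ 2) (a : Fin n → A.dom) (b : Fin n → B.dom)
    (h : FO2Bisimilar τ A B a b) : FO2Equiv τ A B a b :=
  fo2_bisimilar_implies_fo2_equivalent_general τ A B a b h
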